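/- With k, K, R and the Sugiyama–Yasuda symbol SY as in the context: for all f, g, h ∈ R, SY(f, g) + SY(g, h) = SY(f, h) in Ω_{K/k}. (Cocycle/additivity property of the Sugiyama–Yasuda symbol.) -/

import Mathlib

/-!
Write `g = a₀ + a₁h + a₂h² + a₃h³` with `aᵢ ∈ k(K⁴)`; in characteristic 2 this gives
`dg = (a₁ + a₃h²) dh`. Substituting the expansion of `g` into that of `f` in powers of `g` yields
an expansion of `f` in powers of `h` with coefficients in `M`, which by uniqueness is the one
defining `SY(f, h)`. Writing `r` for the square roots of the symbol coefficients, a direct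
computation gives `r(f, h) = r(f, g)·(g₁² + g₃²h) + r(g, h)`, and squaring this is the claim
because `a₁ + a₃h² = (g₁² + g₃²h)²`.

Uniqueness holds because `1, h, h², h³` are independent over `k(K⁴)`, i.e. `h² ∉ k(K⁴)`, which
follows from `k(K⁴) ≠ k(K²)`. That in turn is a degree count over `k(x⁴)` for a transcendental `x`,
and is where finite generation and transcendence degree 1 enter.
-/

open IntermediateField

/-- The subfield `k(K²)` of `K` generated by (the image of) `k` and all squares. -/
def kSq (k K : Type*) [Field k] [Field K] [Algebra k K] : IntermediateField k K :=
  IntermediateField.adjoin k {x : K | ∃ y : K, x = y ^ 2}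

/-- The subfield `k(K⁴)` of `K` generated by (the image of) `k` and all fourth
powers. -/
def kFour (k K : Type*) [Field k] [Field K] [Algebra k K] : IntermediateField k K :=
  IntermediateField.adjoin k {x : K | ∃ y : K, x = y ^ 4}

/-- `SYWitness k K ι f g s` records that `s ∈ K` computes the Sugiyama–Yasuda symbol
`SY(f, g) = s • dg`: writing (inside a perfect closure `L` of `K`, via the embedding
`ι : K → L`) `f = f₀⁴ + f₁⁴ g + f₂⁴ g² + f₃⁴ g³` with `f₀, f₁, f₂, f₃` in the subfield
`M = k^{1/4}·K = {x : L | x⁴ ∈ ι(k(K⁴))}`, one has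
`s = ((f₁f₃ + f₂²)/(f₁² + f₃² g))²`.  (The decomposition, and hence `s`, exists and is
unique; here it is recorded as a predicate.) -/
def SYWitness (k K L : Type*) [Field k] [Field K] [Algebra k K] [Field L]
    (ι : K →+* L) (f g s : K) : Prop :=
  ∃ f0 f1 f2 f3 : L,
    f0 ^ 4 ∈ ι '' (kFour k K : Set K) ∧ f1 ^ 4 ∈ ι '' (kFour k K : Set K) ∧
    f2 ^ 4 ∈ ι '' (kFour k K : Set K) ∧ f3 ^ 4 ∈ ι '' (kFour k K : Set K) ∧
    ι f = f0 ^ 4 + f1 ^ 4 * ι g + f2 ^ 4 * (ι g) ^ 2 + f3 ^ 4 * (ι g) ^ 3 ∧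
    f1 ^ 2 + f3 ^ 2 * ι g ≠ 0 ∧
    ι s = ((f1 * f3 + f2 ^ 2) / (f1 ^ 2 + f3 ^ 2 * ι g)) ^ 2

section

variable {k K : Type*} [Field k] [Field K] [Algebra k K]

theorem sq_mem_kSq (y : K) : y ^ 2 ∈ kSq k K :=
  subset_adjoin _ _ ⟨y, rfl⟩

theorem pow_four_mem_kFour (y : K) : y ^ 4 ∈ kFour k K :=
  subset_adjoin _ _ ⟨y, rfl⟩

theorem kFour_le_kSq : kFour k K ≤ kSq k K := by
  rw [kFour, adjoin_le_iff]
  rintro _ ⟨y, rfl⟩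
  exact (pow_mul y 2 2).symm ▸ sq_mem_kSq (y ^ 2)

theorem eq_zero_of_add_mul_eq_zero {F : IntermediateField k K} {h u v : K} (hh : h ∉ F)
    (hu : u ∈ F) (hv : v ∈ F) (huv : u + v * h = 0) : u = 0 ∧ v = 0 := by
  have hv0 : v = 0 := by
    by_contra hv0
    refine hh ?_
    rw [show h = -(u / v) by field_simp; linear_combination huv]
    exact neg_mem (div_mem hu hv)
  exact ⟨by simpa [hv0] using huv, hv0⟩

theorem exists_eq_add_mul_of_finrank_eq_two {F : IntermediateField k K}
    (hF : Module.finrank F K = 2) {h : K} (hh : h ∉ F) (y : K) :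
    ∃ u ∈ F, ∃ v ∈ F, y = u + v * h := by
  have : FiniteDimensional F K := .of_finrank_pos (by omega)
  have hind : LinearIndependent F ![(1 : K), h] := by
    refine LinearIndependent.pair_iff.2 fun a b hab => ?_
    have := eq_zero_of_add_mul_eq_zero hh a.2 b.2
      (by simpa [Algebra.smul_def, IntermediateField.algebraMap_apply] using hab)
    exact ⟨Subtype.ext this.1, Subtype.ext this.2⟩
  have hy : y ∈ Submodule.span F {(1 : K), h} := by
    rw [← Matrix.range_cons_cons_empty, hind.span_eq_top_of_card_eq_finrank' (by simp [hF])]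
    trivial
  obtain ⟨a, b, hab⟩ := Submodule.mem_span_pair.1 hy
  exact ⟨a, a.2, b, b.2,
    by simpa [Algebra.smul_def, IntermediateField.algebraMap_apply] using hab.symm⟩

theorem eq_zero_of_cubic_in_kFour_eq_zero {h : K} (hh : h ∉ kSq k K) (hh2 : h ^ 2 ∉ kFour k K)
    {b : Fin 4 → K} (hb : ∀ i, b i ∈ kFour k K)
    (hsum : b 0 + b 1 * h + b 2 * h ^ 2 + b 3 * h ^ 3 = 0) : b = 0 := by
  have hsq := sq_mem_kSq (k := k) h
  have hb' i := kFour_le_kSq (hb i)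
  obtain ⟨heven, hodd⟩ := eq_zero_of_add_mul_eq_zero hh
    (add_mem (hb' 0) (mul_mem (hb' 2) hsq)) (add_mem (hb' 1) (mul_mem (hb' 3) hsq))
    (by linear_combination hsum)
  obtain ⟨h0, h2⟩ := eq_zero_of_add_mul_eq_zero hh2 (hb 0) (hb 2) heven
  obtain ⟨h1, h3⟩ := eq_zero_of_add_mul_eq_zero hh2 (hb 1) (hb 3) hodd
  ext i
  fin_cases i <;> assumption

theorem finiteDimensional_of_pow_mem (hfg : (⊤ : IntermediateField k K).FG) {x : K}
    (hxalg : Algebra.IsAlgebraic k⟮x⟯ K) {E : IntermediateField k K} {n : ℕ} (hn : n ≠ 0)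
    (hx : x ^ n ∈ E) : FiniteDimensional E K := by
  have : Algebra.EssFiniteType k K := fg_top_iff.1 hfg
  have : Algebra.EssFiniteType E K := .of_comp k E K
  have hxE : IsIntegral E x := ⟨_, Polynomial.monic_X_pow_sub_C ⟨x ^ n, hx⟩ hn, by simp⟩
  have : Algebra.IsAlgebraic E E⟮x⟯ := isAlgebraic_adjoin_simple hxE
  have hle : k⟮x⟯ ≤ E⟮x⟯.restrictScalars k :=
    adjoin_simple_le_iff.2 (mem_adjoin_simple_self E x)
  have : Algebra.IsAlgebraic E⟮x⟯ K := ⟨fun y => (hxalg.isAlgebraic y).tower_top_of_subalgebra_le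
    (A := k⟮x⟯.toSubalgebra) (B := (E⟮x⟯.restrictScalars k).toSubalgebra) hle⟩
  have : Algebra.IsAlgebraic E K := .trans E E⟮x⟯ K
  exact Algebra.finite_of_essFiniteType_of_isAlgebraic

open Polynomial in
theorem Transcendental.notMem_adjoin_sq [CharP k 2] {s : K} (hs : Transcendental k s) :
    s ∉ k⟮s ^ 2⟯ := by
  intro hmem
  obtain ⟨P, Q, hPQ⟩ := (mem_adjoin_simple_iff k s).1 hmem
  have hQ : Polynomial.aeval (s ^ 2) Q ≠ 0 := by
    intro h0
    rw [h0, div_zero] at hPQ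
    exact hs (hPQ ▸ _root_.isAlgebraic_zero)
  have hroot : Polynomial.aeval s (X * Q.comp (X ^ 2) - P.comp (X ^ 2)) = 0 := by
    simp only [map_sub, map_mul, aeval_comp, map_pow, aeval_X, (eq_div_iff hQ).1 hPQ, sub_self]
  have hzero : X * Q.comp (X ^ 2) - P.comp (X ^ 2) = 0 := by
    by_contra hne
    exact hs ⟨_, hne, hroot⟩
  -- in characteristic 2 the derivative of `X Q(X²) - P(X²)` is `Q(X²)`
  have hX2 : derivative (X ^ 2 : k[X]) = 0 := by
    rw [derivative_X_pow, CharP.cast_eq_zero k 2, C_0, zero_mul]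
  have hder := congrArg derivative hzero
  simp only [derivative_sub, derivative_mul, derivative_comp, hX2, derivative_X, zero_mul,
    mul_zero, one_mul, add_zero, sub_zero, derivative_zero] at hder
  exact hQ (by simpa [aeval_comp] using congrArg (Polynomial.aeval s) hder)

theorem kFour_subset_span_sq (E₀ : IntermediateField k K) [Algebra.IsAlgebraic E₀ K] :
    (kFour k K : Set K) ⊆ Submodule.span E₀ ((· ^ 2) '' (kSq k K : Set K)) := by
  let S : Submonoid K := (kSq k K).toSubmonoid.map (powMonoidHom 2)
  have hle : kFour k K ≤ (adjoin E₀ (S : Set K)).restrictScalars k := by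
    rw [kFour, adjoin_le_iff]
    rintro _ ⟨y, rfl⟩
    refine subset_adjoin E₀ (S : Set K) (Submonoid.mem_map.2 ⟨y ^ 2, sq_mem_kSq y, ?_⟩)
    rw [powMonoidHom_apply, ← pow_mul]
  intro z hz
  have hz : z ∈ Algebra.adjoin E₀ (S : Set K) := by
    rw [← adjoin_toSubalgebra_of_isAlgebraic fun x _ => Algebra.IsAlgebraic.isAlgebraic x]
    exact hle hz
  -- the squares of the field `k(K²)` are closed under multiplication, so their span is a ring
  rwa [← Subalgebra.mem_toSubmodule, Algebra.adjoin_eq_span, Submonoid.closure_eq] at hz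

section Frobenius

variable {p : ℕ} [ExpChar K p]

theorem pow_mem_adjoin_image_pow {S : Set K} {x : K} (hx : x ∈ adjoin k S) :
    x ^ p ∈ adjoin k ((· ^ p) '' S) := by
  induction hx using adjoin_induction with
  | mem y hy => exact subset_adjoin _ _ ⟨y, hy, rfl⟩
  | algebraMap c => rw [← map_pow]; exact IntermediateField.algebraMap_mem _ _
  | add x y _ _ hx hy => rw [add_pow_expChar]; exact add_mem hx hy
  | inv x _ hx => rw [inv_pow]; exact inv_mem hx
  | mul x y _ _ hx hy => rw [mul_pow]; exact mul_mem hx hy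

theorem pow_mem_span_image_pow {E E₀ : IntermediateField k K} (hE : ∀ a ∈ E, a ^ p ∈ E₀)
    {s : Set K} {y : K} (hy : y ∈ Submodule.span E s) :
    y ^ p ∈ Submodule.span E₀ ((· ^ p) '' s) := by
  induction hy using Submodule.span_induction with
  | mem z hz => exact Submodule.subset_span ⟨z, hz, rfl⟩
  | zero => rw [zero_pow (expChar_pos K p).ne']; exact zero_mem _
  | add u v _ _ hu hv => rw [add_pow_expChar]; exact add_mem hu hv
  | smul c u _ hu =>
      have : (c • u) ^ p = (⟨_, hE c c.2⟩ : E₀) • u ^ p := by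
        simp only [Algebra.smul_def, IntermediateField.algebraMap_apply, mul_pow]
      rw [this]
      exact Submodule.smul_mem _ _ hu

theorem relfinrank_le_of_subset_span_pow {E E₀ F F' : IntermediateField k K}
    (hEF : E ≤ F) (hE₀F' : E₀ ≤ F') [FiniteDimensional E K]
    (hE : ∀ a ∈ E, a ^ p ∈ E₀) (hF' : (F' : Set K) ⊆ Submodule.span E₀ ((· ^ p) '' (F : Set K))) :
    relfinrank E₀ F' ≤ relfinrank E F := by
  let b := Module.finBasis E (extendScalars hEF)
  have hF : (F : Set K) ⊆ Submodule.span E (Set.range fun i => (b i : K)) := by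
    intro y hy
    have := Submodule.mem_map_of_mem (f := (extendScalars hEF).val.toLinearMap)
      (b.mem_span ⟨y, hy⟩)
    rwa [LinearMap.map_span, ← Set.range_comp] at this
  have hF'span : Subalgebra.toSubmodule (extendScalars hE₀F').toSubalgebra ≤
      Submodule.span E₀ (Set.range fun i => (b i : K) ^ p) := by
    intro z hz
    refine Submodule.span_le.2 ?_ (hF' hz)
    rintro _ ⟨y, hy, rfl⟩
    simpa only [← Set.range_comp, Function.comp_def, SetLike.mem_coe]
      using pow_mem_span_image_pow hE (hF hy)
  have : FiniteDimensional E₀ (Submodule.span E₀ (Set.range fun i => (b i : K) ^ p)) :=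
    .span_of_finite E₀ (Set.finite_range _)
  calc relfinrank E₀ F'
      = Module.finrank E₀ (Subalgebra.toSubmodule (extendScalars hE₀F').toSubalgebra) :=
        relfinrank_eq_finrank_of_le hE₀F'
    _ ≤ Module.finrank E₀ (Submodule.span E₀ (Set.range fun i => (b i : K) ^ p)) :=
        Submodule.finrank_mono hF'span
    _ ≤ Fintype.card (Fin (Module.finrank E (extendScalars hEF))) := finrank_range_le_card _
    _ = relfinrank E F := by rw [Fintype.card_fin, relfinrank_eq_finrank_of_le hEF]

end Frobenius

theorem sq_mem_kFour_of_mem_kSq [CharP K 2] {y : K} (hy : y ∈ kSq k K) : y ^ 2 ∈ kFour k K := by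
  refine adjoin_le_iff.2 ?_ (pow_mem_adjoin_image_pow hy)
  rintro _ ⟨_, ⟨z, rfl⟩, rfl⟩
  show (z ^ 2) ^ 2 ∈ kFour k K
  rw [← pow_mul]
  exact pow_four_mem_kFour z

theorem kaehlerD_eq_zero_of_mem_kSq [CharP K 2] {y : K} (hy : y ∈ kSq k K) :
    KaehlerDifferential.D k K y = 0 := by
  induction hy using adjoin_induction with
  | mem y hy =>
      obtain ⟨z, rfl⟩ := hy
      rw [Derivation.leibniz_pow, ← Nat.cast_smul_eq_nsmul K, CharP.cast_eq_zero, zero_smul]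
  | algebraMap c => exact Derivation.map_algebraMap _ c
  | add x y _ _ hx hy => rw [map_add, hx, hy, add_zero]
  | inv x _ hx => rw [Derivation.leibniz_inv, hx, smul_zero]
  | mul x y _ _ hx hy => rw [Derivation.leibniz, hx, hy, smul_zero, smul_zero, add_zero]

theorem kaehlerD_add_mul [CharP K 2] {u v : K} (hu : u ∈ kSq k K) (hv : v ∈ kSq k K) (h : K) :
    KaehlerDifferential.D k K (u + v * h) = v • KaehlerDifferential.D k K h := by
  rw [map_add, Derivation.leibniz, kaehlerD_eq_zero_of_mem_kSq hu,
    kaehlerD_eq_zero_of_mem_kSq hv, smul_zero, add_zero, zero_add]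

/-- Frobenius makes `[k(K⁴) : k(x⁴)]` at most `[k(K²) : k(x²)]`, while `[k(K²) : k(x⁴)]` is a
proper multiple of the latter since `x² ∉ k(x⁴)`. -/
theorem kFour_ne_kSq [CharP k 2] (hfg : (⊤ : IntermediateField k K).FG) {x : K}
    (hx : Transcendental k x) (hxalg : Algebra.IsAlgebraic k⟮x⟯ K) : kFour k K ≠ kSq k K := by
  have : CharP K 2 := charP_of_injective_algebraMap' k 2
  let E := k⟮x ^ 2⟯
  let E₀ := k⟮(x ^ 2) ^ 2⟯
  have hE₀E : E₀ ≤ E := adjoin_simple_le_iff.2 (pow_mem (mem_adjoin_simple_self k _) 2)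
  have hEF : E ≤ kSq k K := adjoin_simple_le_iff.2 (sq_mem_kSq x)
  have hE₀F' : E₀ ≤ kFour k K :=
    adjoin_simple_le_iff.2 ((pow_mul x 2 2).symm ▸ pow_four_mem_kFour x)
  have : FiniteDimensional E K :=
    finiteDimensional_of_pow_mem hfg hxalg two_ne_zero (mem_adjoin_simple_self k _)
  have : FiniteDimensional E₀ K := finiteDimensional_of_pow_mem hfg hxalg four_ne_zero
    ((pow_mul x 2 2).symm ▸ mem_adjoin_simple_self k _)
  have hup : relfinrank E₀ (kFour k K) ≤ relfinrank E (kSq k K) :=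
    relfinrank_le_of_subset_span_pow hEF hE₀F'
      (fun a ha => by simpa using pow_mem_adjoin_image_pow (p := 2) ha) (kFour_subset_span_sq E₀)
  have hE₀E_ne_one : relfinrank E₀ E ≠ 1 := fun h =>
    (hx.pow two_pos).notMem_adjoin_sq (relfinrank_eq_one_iff.1 h (mem_adjoin_simple_self k _))
  have hE₀E_ne_zero : relfinrank E₀ E ≠ 0 := fun h =>
    Module.finrank_pos.ne' (zero_dvd_iff.1 (h ▸ relfinrank_dvd_finrank_top_of_le hE₀E))
  have hEF_ne_zero : relfinrank E (kSq k K) ≠ 0 := fun h =>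
    Module.finrank_pos.ne' (zero_dvd_iff.1 (h ▸ relfinrank_dvd_finrank_top_of_le hEF))
  have htower := relfinrank_mul_relfinrank hE₀E hEF
  intro heq
  rw [heq, ← htower] at hup
  have := Nat.mul_le_mul_right (relfinrank E (kSq k K)) (show 2 ≤ relfinrank E₀ E by omega)
  omega

theorem sq_notMem_kFour [CharP K 2] (hne : kFour k K ≠ kSq k K)
    (hdeg : Module.finrank (kSq k K) K = 2) {h : K} (hh : h ∉ kSq k K) : h ^ 2 ∉ kFour k K := by
  intro hh2
  refine hne (le_antisymm kFour_le_kSq ?_)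
  rw [kSq, adjoin_le_iff]
  rintro _ ⟨y, rfl⟩
  obtain ⟨u, hu, v, hv, rfl⟩ := exists_eq_add_mul_of_finrank_eq_two hdeg hh y
  rw [add_pow_char, mul_pow]
  exact add_mem (sq_mem_kFour_of_mem_kSq hu) (mul_mem (sq_mem_kFour_of_mem_kSq hv) hh2)

end

section QuarticExpansion

variable {L : Type*} [Field L]

def quarticExpand (c : Fin 4 → L) (t : L) : L :=
  c 0 ^ 4 + c 1 ^ 4 * t + c 2 ^ 4 * t ^ 2 + c 3 ^ 4 * t ^ 3

def syDenom (c : Fin 4 → L) (t : L) : L := c 1 ^ 2 + c 3 ^ 2 * t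

/-- `SY(f, g) = syRoot c (ι g) ^ 2 • dg` when `ι f = quarticExpand c (ι g)`. -/
def syRoot (c : Fin 4 → L) (t : L) : L := (c 1 * c 3 + c 2 ^ 2) / syDenom c t

/-- Coefficients of `f` over `t` from those of `f` over `g` and of `g` over `t`, obtained by
substituting `g = a² + b² t` (with `a, b` as below) and reducing modulo fourth powers. -/
def composeCoeffs (f g : Fin 4 → L) (t : L) : Fin 4 → L :=
  let a := g 0 ^ 2 + g 2 ^ 2 * t
  let b := g 1 ^ 2 + g 3 ^ 2 * t
  ![f 0 + f 1 * g 0 + f 2 * a + f 3 * (a * g 0 + b * g 2 * t),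
    f 1 * g 1 + f 3 * (a * g 1 + b * g 3 * t),
    f 1 * g 2 + f 2 * b + f 3 * (a * g 2 + b * g 0),
    f 1 * g 3 + f 3 * (a * g 3 + b * g 1)]

theorem composeCoeffs_mem {S : Subfield L} {f g : Fin 4 → L} {t : L} (hf : ∀ i, f i ∈ S)
    (hg : ∀ i, g i ∈ S) (ht : t ∈ S) (i : Fin 4) : composeCoeffs f g t i ∈ S := by
  have := hf 0; have := hf 1; have := hf 2; have := hf 3
  have := hg 0; have := hg 1; have := hg 2; have := hg 3
  fin_cases i <;>
    simp only [composeCoeffs, Fin.zero_eta, Fin.mk_one, Fin.reduceFinMk, Matrix.cons_val] <;>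
    apply_rules [add_mem, mul_mem, pow_mem]

variable [CharP L 2]

theorem quarticExpand_composeCoeffs (f g : Fin 4 → L) (t : L) :
    quarticExpand f (quarticExpand g t) = quarticExpand (composeCoeffs f g t) t := by
  simp only [quarticExpand, composeCoeffs, Matrix.cons_val]
  grind

theorem syDenom_composeCoeffs (f g : Fin 4 → L) (t : L) :
    syDenom (composeCoeffs f g t) t = syDenom f (quarticExpand g t) * syDenom g t := by
  simp only [quarticExpand, composeCoeffs, syDenom, Matrix.cons_val]
  grind

theorem syRoot_composeCoeffs {f g : Fin 4 → L} {t : L} (hf : syDenom f (quarticExpand g t) ≠ 0)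
    (hg : syDenom g t ≠ 0) :
    syRoot (composeCoeffs f g t) t = syRoot f (quarticExpand g t) * syDenom g t + syRoot g t := by
  rw [syRoot, syDenom_composeCoeffs, syRoot, syRoot, div_mul_eq_mul_div, div_add_div _ _ hf hg]
  congr 1
  simp only [quarticExpand, composeCoeffs, syDenom, Matrix.cons_val]
  grind

end QuarticExpansion

section QuarticRootField

variable {k K L : Type*} [Field k] [Field K] [Algebra k K] [Field L] [CharP L 2]

variable (k) in
/-- The field `M = k^{1/4}·K` of the paper. -/
def quarticRootField (ι : K →+* L) : Subfield L :=
  ((kFour k K).toSubfield.map ι).comap (iterateFrobenius L 2 2)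

theorem mem_quarticRootField {ι : K →+* L} {z : L} :
    z ∈ quarticRootField k ι ↔ z ^ 4 ∈ ι '' (kFour k K : Set K) := by
  simp [quarticRootField, iterateFrobenius_def]

theorem eq_of_quarticExpand_eq {ι : K →+* L} {h : K} (hh : h ∉ kSq k K)
    (hh2 : h ^ 2 ∉ kFour k K) {c c' : Fin 4 → L} (hc : ∀ i, c i ∈ quarticRootField k ι)
    (hc' : ∀ i, c' i ∈ quarticRootField k ι)
    (heq : quarticExpand c (ι h) = quarticExpand c' (ι h)) : c = c' := by
  choose b hb hbι using fun i => mem_quarticRootField.1 (sub_mem (hc i) (hc' i))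
  have hsum : b 0 + b 1 * h + b 2 * h ^ 2 + b 3 * h ^ 3 = 0 := by
    apply ι.injective
    simp only [map_add, map_mul, map_pow, hbι, map_zero]
    unfold quarticExpand at heq
    grind
  have hb0 := eq_zero_of_cubic_in_kFour_eq_zero hh hh2 hb hsum
  ext i
  have := hbι i
  rw [hb0, Pi.zero_apply, map_zero, eq_comm, pow_eq_zero_iff four_ne_zero, sub_eq_zero] at this
  exact this

theorem SYWitness.exists_coeffs {ι : K →+* L} {f g s : K} (hs : SYWitness k K L ι f g s) :
    ∃ c : Fin 4 → L, (∀ i, c i ∈ quarticRootField k ι) ∧ ι f = quarticExpand c (ι g) ∧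
      syDenom c (ι g) ≠ 0 ∧ ι s = syRoot c (ι g) ^ 2 := by
  obtain ⟨c0, c1, c2, c3, h0, h1, h2, h3, hf, hden, hs⟩ := hs
  refine ⟨![c0, c1, c2, c3], fun i => mem_quarticRootField.2 ?_, hf, hden, hs⟩
  fin_cases i <;> assumption

theorem exists_kaehlerD_eq_smul {ι : K →+* L} {g h : K} {c : Fin 4 → L}
    (hc : ∀ i, c i ∈ quarticRootField k ι) (hg : ι g = quarticExpand c (ι h)) :
    ∃ w : K, ι w = syDenom c (ι h) ^ 2 ∧
      KaehlerDifferential.D k K g = w • KaehlerDifferential.D k K h := by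
  have : CharP K 2 := ι.charP ι.injective 2
  choose a ha haι using fun i => mem_quarticRootField.1 (hc i)
  have hsq := sq_mem_kSq (k := k) h
  have ha' i := kFour_le_kSq (ha i)
  have hg' : g = (a 0 + a 2 * h ^ 2) + (a 1 + a 3 * h ^ 2) * h := by
    apply ι.injective
    simp only [map_add, map_mul, map_pow, haι, hg, quarticExpand]
    ring
  refine ⟨a 1 + a 3 * h ^ 2, ?_, ?_⟩
  · simp only [map_add, map_mul, map_pow, haι, syDenom]
    grind
  · rw [hg', kaehlerD_add_mul (add_mem (ha' 0) (mul_mem (ha' 2) hsq))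
      (add_mem (ha' 1) (mul_mem (ha' 3) hsq))]

end QuarticRootField

theorem SY_symbol_additive_general
    (k K : Type*) [Field k] [CharP k 2] [Field K] [Algebra k K]
    (hfg : (⊤ : IntermediateField k K).FG)
    (htr : ∃ x : K, Transcendental k x ∧
      Algebra.IsAlgebraic (IntermediateField.adjoin k {x}) K)
    (hdeg : Module.finrank (kSq k K) K = 2)
    (L : Type*) [Field L] (ι : K →+* L)
    (f g h : K) (hh : h ∉ kSq k K)
    (s₁ s₂ s₃ : K) (hs₁ : SYWitness k K L ι f g s₁) (hs₂ : SYWitness k K L ι g h s₂)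
    (hs₃ : SYWitness k K L ι f h s₃) :
    s₁ • (KaehlerDifferential.D k K g : Ω[K⁄k]) + s₂ • KaehlerDifferential.D k K h =
      s₃ • KaehlerDifferential.D k K h := by
  have : CharP K 2 := charP_of_injective_algebraMap' k 2
  have : CharP L 2 := charP_of_injective_ringHom ι.injective 2
  obtain ⟨x, hx, hxalg⟩ := htr
  have hh2 := sq_notMem_kFour (kFour_ne_kSq hfg hx hxalg) hdeg hh
  obtain ⟨cf, hcf, hf, hf_den, hs₁⟩ := hs₁.exists_coeffs
  obtain ⟨cg, hcg, hg, hg_den, hs₂⟩ := hs₂.exists_coeffs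
  obtain ⟨c, hc, hf', -, hs₃⟩ := hs₃.exists_coeffs
  obtain ⟨w, hw, hDg⟩ := exists_kaehlerD_eq_smul hcg hg
  have hιh : ι h ∈ quarticRootField k ι :=
    mem_quarticRootField.2 ⟨_, pow_four_mem_kFour h, map_pow ι h 4⟩
  have hc_eq : c = composeCoeffs cf cg (ι h) := by
    refine eq_of_quarticExpand_eq hh hh2 hc (composeCoeffs_mem hcf hcg hιh) ?_
    rw [← hf', ← quarticExpand_composeCoeffs, ← hg, hf]
  rw [hg] at hf_den hs₁
  rw [hDg, smul_smul, ← add_smul]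
  congr 1
  apply ι.injective
  rw [map_add, map_mul, hs₁, hs₂, hs₃, hw, hc_eq, syRoot_composeCoeffs hf_den hg_den, add_pow_char,
    mul_pow]

/-- **Additivity of the Sugiyama–Yasuda symbol** (Lemma 4.7 / Theorem 4.8(c) of
Kedlaya–Litt–Witaszek): for all `f, g, h ∈ R = K \ k(K²)`,
`SY(f, g) + SY(g, h) = SY(f, h)` in `Ω[K⁄k]`. -/
theorem SY_symbol_additive
    (k K : Type*) [Field k] [CharP k 2] [Field K] [Algebra k K]
    (hfg : (⊤ : IntermediateField k K).FG)
    (htr : ∃ x : K, Transcendental k x ∧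
      Algebra.IsAlgebraic (IntermediateField.adjoin k {x}) K)
    (halg : ∀ x : K, IsAlgebraic k x → x ∈ (algebraMap k K).range)
    (hdeg : Module.finrank (kSq k K) K = 2)
    (L : Type*) [Field L] (ι : K →+* L)
    (hLperf : ∀ x : L, ∃ y : L, y ^ 2 = x)
    (hLinsep : ∀ x : L, ∃ n : ℕ, x ^ 2 ^ n ∈ Set.range ι)
    (f g h : K) (hf : f ∉ kSq k K) (hg : g ∉ kSq k K) (hh : h ∉ kSq k K)
    (s₁ s₂ s₃ : K) (hs₁ : SYWitness k K L ι f g s₁) (hs₂ : SYWitness k K L ι g h s₂)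
    (hs₃ : SYWitness k K L ι f h s₃) :
    s₁ • (KaehlerDifferential.D k K g : Ω[K⁄k]) + s₂ • KaehlerDifferential.D k K h =
      s₃ • KaehlerDifferential.D k K h :=
  SY_symbol_additive_general k K hfg htr hdeg L ι f g h hh s₁ s₂ s₃ hs₁ hs₂ hs₃
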